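/- arXiv:2008.00221 — 3 statements merged into one kernel-verified Lean document; each statement's English description precedes it below -/
import Mathlib

section
/- For any two orthogonal projections P and Q on a Hilbert space, the operator norm of the commutator [P,Q] = PQ - QP is at most 1/2. -/
open ContinuousLinearMap

set_option maxHeartbeats 1000000

/-- For any two orthogonal projections `P`, `Q` on a complex Hilbert space, the operator
norm of the commutator `[P,Q] = P∘Q - Q∘P` is at most `1/2`. -/
theorem commutator_of_projections_norm_le_half
    {H : Type*} [NormedAddCommGroup H] [InnerProductSpace ℂ H] [CompleteSpace H]
    (P Q : H →L[ℂ] H)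
    (hP_idem : P ∘L P = P) (hP_sa : ContinuousLinearMap.adjoint P = P)
    (hQ_idem : Q ∘L Q = Q) (hQ_sa : ContinuousLinearMap.adjoint Q = Q) :
    ‖P ∘L Q - Q ∘L P‖ ≤ 1 / 2 := by
  have hP : P * P = P := hP_idem
  have hQ : Q * Q = Q := hQ_idem
  set C : H →L[ℂ] H := P * Q - Q * P with hC
  have hcomp : P ∘L Q - Q ∘L P = C := rfl
  rw [hcomp]
  set S : H →L[ℂ] H := P + Q - 1 with hS
  have hSsa : IsSelfAdjoint S := by
    rw [IsSelfAdjoint, hS]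
    simp [star_sub, star_add, star_one, star_eq_adjoint, hP_sa, hQ_sa]
  have hstarC : star C = -C := by
    simp only [hC, star_sub, star_mul, star_eq_adjoint, hP_sa, hQ_sa]
    abel
  have hP' : ∀ x : H →L[ℂ] H, P * (P * x) = P * x := fun x => by rw [← mul_assoc, hP]
  have hQ' : ∀ x : H →L[ℂ] H, Q * (Q * x) = Q * x := fun x => by rw [← mul_assoc, hQ]
  -- key identity : C*C = S² - S⁴
  have key : star C * C = S^2 - S^4 := by
    rw [hstarC, hC, hS]
    noncomm_ring
    simp only [hP', hQ', hP, hQ]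
    abel
  have hM : IsSelfAdjoint (S^2 - (1/2 : ℝ) • (1 : H →L[ℂ] H)) :=
    (hSsa.pow 2).sub (IsSelfAdjoint.smul (star_trivial _) (star_one _))
  have hsq : (0 : H →L[ℂ] H) ≤ (S^2 - (1/2 : ℝ) • 1) * (S^2 - (1/2 : ℝ) • 1) := by
    nth_rewrite 1 [← hM]
    exact star_mul_self_nonneg _
  have expand : (S^2 - (1/2 : ℝ) • (1 : H →L[ℂ] H)) * (S^2 - (1/2 : ℝ) • 1)
      = S^4 - S^2 + (1/4 : ℝ) • 1 := by
    have e1 : S^2 * S^2 = S^4 := by rw [← pow_add]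
    simp only [sub_mul, mul_sub, smul_mul_assoc, mul_smul_comm, one_mul, mul_one, smul_smul, e1]
    module
  have hle : star C * C ≤ (1/4 : ℝ) • (1 : H →L[ℂ] H) := by
    rw [key]
    rw [expand] at hsq
    have heq : (1/4 : ℝ) • (1 : H →L[ℂ] H) - (S^2 - S^4) = S^4 - S^2 + (1/4 : ℝ) • 1 := by
      abel
    exact sub_nonneg.mp (by rw [heq]; exact hsq)
  have hnn : (0 : H →L[ℂ] H) ≤ star C * C := star_mul_self_nonneg C
  have hnorm : ‖star C * C‖ ≤ 1/4 := by
    refine le_trans (CStarAlgebra.norm_le_norm_of_nonneg_of_le hnn hle) ?_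
    rw [norm_smul, Real.norm_eq_abs]
    have h1 : ‖(1 : H →L[ℂ] H)‖ ≤ 1 := by
      rw [ContinuousLinearMap.one_def]; exact ContinuousLinearMap.norm_id_le
    have h2 : |(1/4 : ℝ)| = 1/4 := by norm_num
    nlinarith [norm_nonneg (1 : H →L[ℂ] H)]
  have hCC : ‖star C * C‖ = ‖C‖ * ‖C‖ := CStarRing.norm_star_mul_self
  nlinarith [norm_nonneg C]
end

section
/- The Hankel operator H_E with symbol the indicator function of the right half of the unit circle satisfies ‖H_E‖ ≤ 1/2, since the function φ(z) = z̄(1_E(z) - 1/2) has ‖φ‖_∞ = 1/2 and φ̂(k) = 1̂_E(-1-k) for all k ≥ 0. -/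
open MeasureTheory Real AddCircle ContinuousLinearMap

open scoped ComplexConjugate

noncomputable section

local instance : Fact (0 < 2 * π) := ⟨Real.two_pi_pos⟩

/-- `L²` of the circle (with normalized Haar measure). -/
abbrev L2T := Lp ℂ 2 (@haarAddCircle (2 * π) _)

/-- The indicator function of the right half `E = {z ∈ 𝕋 : Re z > 0}` of the circle. -/
def indE : AddCircle (2 * π) → ℂ :=
  Set.indicator {θ : AddCircle (2 * π) | 0 < (fourier 1 θ).re} fun _ => (1 : ℂ)

/-!
Since `(I - Π) Π = 0`, the Hankel operator equals `(I - Π) (M_{1_E} - 1/2) Π`; the middle factor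
is multiplication by a function of modulus `1/2`, and `Π`, `I - Π` are orthogonal projections,
hence of norm at most `1`. The same symbol `1_E - 1/2`, twisted by `z̄`, gives the Nehari
function `ψ`: its nonnegative coefficients are those of `1_E` shifted by one, and the symmetry
of `E` under `z ↦ z̄` reflects them to negative indices.
-/

section Fourier

variable {T : ℝ}

theorem fourier_apply_neg (n : ℤ) (x : AddCircle T) : fourier n (-x) = fourier (-n) x := by
  rw [fourier_apply, smul_neg, fourier_neg', fourier_neg]

variable [Fact (0 < T)] {E : Type*} [NormedAddCommGroup E] [NormedSpace ℂ E]

theorem fourierCoeff_fourier_smul (f : AddCircle T → E) (m n : ℤ) :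
    fourierCoeff (fun t => fourier m t • f t) n = fourierCoeff f (n - m) := by
  rw [fourierCoeff, fourierCoeff, show -(n - m) = -n + m by ring]
  simp only [smul_smul, ← fourier_add]

theorem fourierCoeff_comp_neg (f : AddCircle T → E) (n : ℤ) :
    fourierCoeff (fun t => f (-t)) n = fourierCoeff f (-n) := by
  simp only [fourierCoeff, neg_neg]
  conv_rhs => rw [← integral_neg_eq_self]
  simp only [fourier_apply_neg]

theorem fourierCoeff_sub_const {f : AddCircle T → ℂ} (hf : Integrable f haarAddCircle) (c : ℂ)
    {n : ℤ} (hn : n ≠ 0) : fourierCoeff (fun t => f t - c) n = fourierCoeff f n := by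
  have hsplit : (fun t => f t - c) = f + fun t => -c * fourier 0 t := by
    ext t; simp [sub_eq_add_neg]
  have hconst : Integrable (fun t => -c * fourier 0 t) (haarAddCircle (T := T)) :=
    ((fourier 0).continuous.integrable_of_hasCompactSupport (.of_compactSpace _)).const_mul _
  rw [hsplit, fourierCoeff.add hf hconst, Pi.add_apply, fourierCoeff.const_mul,
    fourierCoeff_fourier, Pi.single_eq_of_ne hn, mul_zero, add_zero]

end Fourier

theorem eLpNorm_top_eq_of_forall_enorm_eq {α E : Type*} [MeasurableSpace α] {μ : Measure α}
    [NormedAddCommGroup E] {f : α → E} {c : ENNReal} (hμ : μ ≠ 0) (hf : ∀ x, ‖f x‖ₑ = c) :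
    eLpNorm f ⊤ μ = c := by
  rw [eLpNorm_exponent_top, eLpNormEssSup, funext hf, essSup_const _ hμ]

theorem ContinuousLinearMap.opNorm_le_of_ae_eq_mul {α 𝕜 : Type*} [MeasurableSpace α]
    {μ : Measure α} [NontriviallyNormedField 𝕜] {p : ENNReal} [Fact (1 ≤ p)]
    (T : Lp 𝕜 p μ →L[𝕜] Lp 𝕜 p μ) (g : α → 𝕜) {C : ℝ} (hC : 0 ≤ C)
    (hg : ∀ᵐ x ∂μ, ‖g x‖ ≤ C) (hT : ∀ f, T f =ᵐ[μ] fun x => g x * f x) : ‖T‖ ≤ C :=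
  opNorm_le_bound T hC fun f => Lp.norm_le_mul_norm_of_ae_le_mul <| by
    filter_upwards [hT f, hg] with x hTx hgx
    rw [hTx, norm_mul]
    gcongr

theorem IsStarProjection.norm_one_sub_mul_mul_le {A : Type*} [NormedRing A] [StarRing A]
    [CStarRing A] {p : A} (hp : IsStarProjection p) (a : A) {b : A} (hb : Commute b p) :
    ‖(1 - p) * a * p‖ ≤ ‖a - b‖ := by
  have hvanish : (1 - p) * b * p = 0 := by
    rw [mul_assoc, hb.eq, ← mul_assoc, hp.one_sub_mul_self, zero_mul]
  calc ‖(1 - p) * a * p‖ = ‖(1 - p) * (a - b) * p‖ := by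
        rw [mul_sub (1 - p) a b, sub_mul _ _ p, hvanish, sub_zero]
    _ ≤ ‖1 - p‖ * ‖a - b‖ * ‖p‖ := norm_mul₃_le
    _ ≤ 1 * ‖a - b‖ * 1 := by
        gcongr
        exacts [hp.one_sub.norm_le, hp.norm_le]
    _ = ‖a - b‖ := by ring

theorem measurableSet_re_fourier_pos :
    MeasurableSet {θ : AddCircle (2 * π) | 0 < (fourier 1 θ).re} :=
  (isOpen_lt continuous_const (Complex.continuous_re.comp (fourier 1).continuous)).measurableSet

theorem integrable_indE : Integrable indE haarAddCircle :=
  (integrable_const (1 : ℂ)).indicator measurableSet_re_fourier_pos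

theorem indE_neg (θ : AddCircle (2 * π)) : indE (-θ) = indE θ := by
  have hre : (fourier 1 (-θ)).re = (fourier 1 θ).re := by
    rw [fourier_apply_neg, fourier_neg, Complex.conj_re]
  simp only [indE, Set.indicator_apply, Set.mem_ofPred_eq, hre]

theorem norm_indE_sub_half (θ : AddCircle (2 * π)) : ‖indE θ - 1 / 2‖ = 1 / 2 := by
  simp only [indE, Set.indicator_apply, Set.mem_ofPred_eq]
  split_ifs <;> norm_num

/-- The Hankel operator `H_E = (I - Π) M_{1_E} Π` with symbol the indicator of the right
half circle satisfies `‖H_E‖ ≤ 1/2`: indeed the function `ψ(z) = z̄ (1_E(z) - 1/2)` has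
`‖ψ‖_∞ = 1/2` and `ψ̂(k) = 1̂_E(-1-k)` for all `k ≥ 0` (Nehari's theorem). -/
theorem norm_hankel_halfcircle_le_half
    (M : L2T →L[ℂ] L2T)
    (hM : ∀ f : L2T, (M f : AddCircle (2 * π) → ℂ) =ᵐ[haarAddCircle] fun θ => indE θ * f θ)
    (P : L2T →L[ℂ] L2T)
    (hP_mem : ∀ f : L2T, ∀ p : ℤ, p < 0 → fourierCoeff (P f : AddCircle (2 * π) → ℂ) p = 0)
    (hP_fix : ∀ f : L2T, (∀ p : ℤ, p < 0 → fourierCoeff (f : AddCircle (2 * π) → ℂ) p = 0) →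
      P f = f)
    (hP_sa : ∀ f g : L2T, inner (𝕜 := ℂ) (P f) g = inner (𝕜 := ℂ) f (P g)) :
    ‖(ContinuousLinearMap.id ℂ L2T - P) ∘L M ∘L P‖ ≤ 1 / 2 ∧
      eLpNorm (fun θ => conj (fourier 1 θ) * (indE θ - 1 / 2)) ⊤ haarAddCircle = 1 / 2 ∧
      ∀ k : ℤ, 0 ≤ k →
        fourierCoeff (fun θ => conj (fourier 1 θ) * (indE θ - 1 / 2)) k =
          fourierCoeff indE (-1 - k) := by
  have hP : IsStarProjection P :=
    ⟨ContinuousLinearMap.ext fun f => hP_fix _ (hP_mem f),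
      LinearMap.IsSymmetric.isSelfAdjoint hP_sa⟩
  have hM_sub : ‖M - (1 / 2 : ℂ) • 1‖ ≤ 1 / 2 := by
    refine opNorm_le_of_ae_eq_mul _ (fun θ => indE θ - 1 / 2) (by norm_num)
      (.of_forall fun θ => (norm_indE_sub_half θ).le) fun f => ?_
    filter_upwards [Lp.coeFn_sub (M f) ((1 / 2 : ℂ) • f), Lp.coeFn_smul (1 / 2 : ℂ) f, hM f]
      with θ hsub hsmul hMθ
    simp only [sub_apply, smul_apply, one_apply_eq_self]
    rw [hsub, Pi.sub_apply, hsmul, hMθ, Pi.smul_apply, smul_eq_mul, sub_mul]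
  have hψ : ∀ θ : AddCircle (2 * π), conj (fourier 1 θ) * (indE θ - 1 / 2) =
      fourier (-1) θ • (indE θ - 1 / 2) := fun θ => by rw [fourier_neg, smul_eq_mul]
  refine ⟨?_, ?_, fun k hk => ?_⟩
  · calc ‖(ContinuousLinearMap.id ℂ L2T - P) ∘L M ∘L P‖ = ‖(1 - P) * M * P‖ := rfl
      _ ≤ 1 / 2 := (hP.norm_one_sub_mul_mul_le M ((Commute.one_left P).smul_left _)).trans hM_sub
  · refine eLpNorm_top_eq_of_forall_enorm_eq (NeZero.ne _) fun θ => ?_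
    rw [← ofReal_norm, norm_mul, RCLike.norm_conj, fourier_apply, Circle.norm_coe, one_mul,
      norm_indE_sub_half, ENNReal.ofReal_div_of_pos two_pos, ENNReal.ofReal_one,
      ENNReal.ofReal_ofNat]
  · rw [funext hψ, fourierCoeff_fourier_smul, fourierCoeff_sub_const integrable_indE _ (by omega),
      show -1 - k = -(k - -1) by ring, ← fourierCoeff_comp_neg]
    simp only [indE_neg]
end
end

section
/- For integer p and x ∈ ℝ, the Hilbert transform of the Bessel function J_p admits the representation H(J_p)(x) = (1/π)∫₀^π sin(x sin t - pt)dt; in particular H(J_p)(0) = (1/π)∫₀^π sin(-pt)dt = -(1-cos(πp))/(πp) for p ≠ 0, which vanishes for even p. -/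
/-!
Since `cos A - cos B = -2 sin ((A + B) / 2) sin ((A - B) / 2)`,
`J_p(x + t) - J_p(x - t) = (2/π) ∫₀^π sin (p s - x sin s) sin (t sin s) ds`.
Dividing by `t` and integrating over `[ε, R]` turns the inner factor into
`Si (R sin s) - Si (ε sin s)`, where `Si` is the sine integral. Letting `R → ∞` and then
`ε → 0` by dominated convergence, with `Si ∞ = π/2` and `Si 0 = 0`, leaves
`(1/π) ∫₀^π sin (x sin s - p s) ds`.

`Si ∞ = π/2`, with error at most `2/R`, follows from `sinc t = ∫₀^∞ sin t e^{-tu} du` by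
integrating in `t` first. The integral over `(ε, ∞)` converges absolutely because
`J_p(t) = O(t^{-1/2})`: by Bessel's equation `u = √t J_p` satisfies
`u'' = ((p² - 1/4) / t² - 1) u`, and for such `u` the energy `(u² + u'²) e^{|p² - 1/4| / t}`
is nonincreasing.
-/

open Real Filter

noncomputable section

/-- The Bessel function of the first kind of integer order `p`,
`J_p(x) = (1/π) ∫₀^π cos(pt - x sin t) dt`. -/
def besselJ (p : ℤ) (x : ℝ) : ℝ :=
  (1 / π) * ∫ t in (0 : ℝ)..π, Real.cos (p * t - x * Real.sin t)

open MeasureTheory Set Topology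

def sinIntegral (y : ℝ) : ℝ := ∫ v in (0 : ℝ)..y, sinc v

@[fun_prop]
lemma continuous_sinIntegral : Continuous sinIntegral :=
  intervalIntegral.continuous_primitive (fun _ _ => continuous_sinc.intervalIntegrable _ _) 0

@[simp]
lemma sinIntegral_zero : sinIntegral 0 = 0 := intervalIntegral.integral_same

lemma abs_sinIntegral_le_abs (y : ℝ) : |sinIntegral y| ≤ |y| := by
  simpa [sinIntegral] using intervalIntegral.norm_integral_le_of_norm_le_const (a := 0) (b := y)
    (f := sinc) (fun v _ => (norm_eq_abs _).trans_le (abs_sinc_le_one v))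

lemma sinIntegral_sub_sinIntegral (a b : ℝ) :
    sinIntegral b - sinIntegral a = ∫ v in a..b, sinc v :=
  intervalIntegral.integral_interval_sub_left (continuous_sinc.intervalIntegrable _ _)
    (continuous_sinc.intervalIntegrable _ _)

lemma integral_exp_neg_mul_Ioi {t : ℝ} (ht : 0 < t) :
    ∫ u in Ioi (0 : ℝ), exp (-t * u) = t⁻¹ := by
  rw [integral_exp_mul_Ioi (neg_lt_zero.2 ht)]
  simp

def sinIntegralRemainder (R u : ℝ) : ℝ := exp (-R * u) * (u * sin R + cos R) / (1 + u ^ 2)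

lemma integral_sin_mul_exp_neg_mul (R u : ℝ) :
    ∫ t in (0 : ℝ)..R, sin t * exp (-t * u) = (1 + u ^ 2)⁻¹ - sinIntegralRemainder R u := by
  have hu : 1 + u ^ 2 ≠ 0 := by positivity
  have hderiv : ∀ t, HasDerivAt (fun t => -exp (-t * u) * (u * sin t + cos t) / (1 + u ^ 2))
      (sin t * exp (-t * u)) t := by
    intro t
    have hexp : HasDerivAt (fun t => exp (-t * u)) (exp (-t * u) * (-u)) t := by
      simpa using ((hasDerivAt_neg t).mul_const u).exp
    refine ((hexp.fun_neg.fun_mul (((hasDerivAt_sin t).const_mul u).fun_add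
      (hasDerivAt_cos t))).div_const (1 + u ^ 2)).congr_deriv ?_
    field_simp
    ring
  rw [intervalIntegral.integral_eq_sub_of_hasDerivAt (fun t _ => hderiv t)
    ((by fun_prop : Continuous fun t => sin t * exp (-t * u)).intervalIntegrable _ _),
    sinIntegralRemainder]
  simp only [neg_zero, zero_mul, exp_zero, sin_zero, cos_zero, mul_zero, zero_add]
  ring

lemma abs_sinIntegralRemainder_le (R u : ℝ) :
    |sinIntegralRemainder R u| ≤ 2 * exp (-R * u) := by
  have hu : 0 < 1 + u ^ 2 := by positivity
  have htrig : |u * sin R + cos R| ≤ 2 * (1 + u ^ 2) := by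
    calc |u * sin R + cos R| ≤ |u| * 1 + 1 := by
          grw [abs_add_le, abs_mul, abs_sin_le_one, abs_cos_le_one]
      _ ≤ 2 * (1 + u ^ 2) := by nlinarith [abs_nonneg u, sq_abs u]
  rw [sinIntegralRemainder, abs_div, abs_mul, abs_exp, abs_of_pos hu, div_le_iff₀ hu]
  calc exp (-R * u) * |u * sin R + cos R| ≤ exp (-R * u) * (2 * (1 + u ^ 2)) := by gcongr
    _ = 2 * exp (-R * u) * (1 + u ^ 2) := by ring

lemma integrableOn_sinIntegralRemainder {R : ℝ} (hR : 0 < R) :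
    IntegrableOn (sinIntegralRemainder R) (Ioi 0) :=
  ((exp_neg_integrableOn_Ioi 0 hR).const_mul 2).mono'
    (show Continuous (sinIntegralRemainder R) from
      (by fun_prop : Continuous _).div (by fun_prop) fun u => by positivity).aestronglyMeasurable
    (ae_of_all _ fun u => abs_sinIntegralRemainder_le R u)

lemma sinc_eq_integral_sin_mul_exp_neg_mul {t : ℝ} (ht : 0 < t) :
    sinc t = ∫ u in Ioi (0 : ℝ), sin t * exp (-t * u) := by
  rw [integral_const_mul, integral_exp_neg_mul_Ioi ht, sinc_of_ne_zero ht.ne', div_eq_mul_inv]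

lemma integrable_sin_mul_exp_neg_mul {R : ℝ} (hR : 0 ≤ R) :
    Integrable (Function.uncurry fun t u : ℝ => sin t * exp (-t * u))
      ((volume.restrict (uIoc 0 R)).prod (volume.restrict (Ioi 0))) := by
  have hmeas : AEStronglyMeasurable (Function.uncurry fun t u : ℝ => sin t * exp (-t * u))
      ((volume.restrict (uIoc 0 R)).prod (volume.restrict (Ioi 0))) :=
    (by fun_prop : Continuous fun q : ℝ × ℝ => sin q.1 * exp (-q.1 * q.2)).aestronglyMeasurable
  rw [uIoc_of_le hR] at hmeas ⊢
  refine (integrable_prod_iff hmeas).2 ⟨?_, ?_⟩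
  · filter_upwards [ae_restrict_mem measurableSet_Ioc] with t ht
    exact (exp_neg_integrableOn_Ioi 0 ht.1).const_mul (sin t)
  · refine (integrable_const (1 : ℝ)).mono' hmeas.norm.integral_prod_right' ?_
    filter_upwards [ae_restrict_mem measurableSet_Ioc] with t ht
    simp only [Function.uncurry_apply_pair, norm_mul, norm_eq_abs, abs_exp]
    rw [integral_const_mul, integral_exp_neg_mul_Ioi ht.1, abs_of_nonneg (by positivity [ht.1]),
      ← div_eq_mul_inv, div_le_one ht.1]
    exact abs_sin_le_abs.trans (abs_of_pos ht.1).le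

lemma sinIntegral_eq_pi_div_two_sub {R : ℝ} (hR : 0 < R) :
    sinIntegral R = π / 2 - ∫ u in Ioi (0 : ℝ), sinIntegralRemainder R u := by
  have hsinc :
      sinIntegral R = ∫ t in (0 : ℝ)..R, ∫ u in Ioi (0 : ℝ), sin t * exp (-t * u) :=
    intervalIntegral.integral_congr_ae (ae_of_all _ fun t ht =>
      sinc_eq_integral_sin_mul_exp_neg_mul (by rw [uIoc_of_le hR.le] at ht; exact ht.1))
  rw [hsinc, intervalIntegral_integral_swap (integrable_sin_mul_exp_neg_mul hR.le)]
  simp_rw [integral_sin_mul_exp_neg_mul]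
  rw [integral_sub integrable_inv_one_add_sq.integrableOn (integrableOn_sinIntegralRemainder hR)]
  simp

lemma abs_sinIntegral_sub_pi_div_two_le {R : ℝ} (hR : 0 < R) :
    |sinIntegral R - π / 2| ≤ 2 / R := by
  rw [sinIntegral_eq_pi_div_two_sub hR, sub_sub_cancel_left, abs_neg]
  calc |∫ u in Ioi (0 : ℝ), sinIntegralRemainder R u|
      ≤ ∫ u in Ioi (0 : ℝ), 2 * exp (-R * u) :=
        (norm_eq_abs _).symm.trans_le <| norm_integral_le_of_norm_le
          ((exp_neg_integrableOn_Ioi 0 hR).const_mul 2)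
          (ae_of_all _ fun u => abs_sinIntegralRemainder_le R u)
    _ = 2 / R := by rw [integral_const_mul, integral_exp_neg_mul_Ioi hR, div_eq_mul_inv]

lemma tendsto_sinIntegral_atTop : Tendsto sinIntegral atTop (𝓝 (π / 2)) := by
  refine tendsto_sub_nhds_zero_iff.1 (squeeze_zero_norm' ?_
    (tendsto_const_nhds.div_atTop tendsto_id : Tendsto (fun R : ℝ => 2 / R) atTop (𝓝 0)))
  filter_upwards [eventually_gt_atTop 0] with R hR
  exact abs_sinIntegral_sub_pi_div_two_le hR

lemma abs_sinIntegral_le_four {y : ℝ} (hy : 0 ≤ y) : |sinIntegral y| ≤ 4 := by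
  rcases le_or_gt y 1 with hy1 | hy1
  · linarith [abs_sinIntegral_le_abs y, abs_of_nonneg hy]
  · have h2 : 2 / y ≤ 2 := by rw [div_le_iff₀ (by linarith)]; linarith
    have := abs_sinIntegral_sub_pi_div_two_le (by linarith : 0 < y)
    have := abs_sub_abs_le_abs_sub (sinIntegral y) (π / 2)
    rw [abs_of_pos (by positivity : 0 < π / 2)] at this
    linarith [pi_le_four]

lemma hasDerivAt_intervalIntegral_of_abs_deriv_le {F F' : ℝ → ℝ → ℝ} {a b C x₀ : ℝ}
    (hF : ∀ x, Continuous (F x)) (hF' : Continuous (F' x₀))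
    (hderiv : ∀ x t, HasDerivAt (F · t) (F' x t) x) (hbound : ∀ x t, |F' x t| ≤ C) :
    HasDerivAt (fun x => ∫ t in a..b, F x t) (∫ t in a..b, F' x₀ t) x₀ :=
  (intervalIntegral.hasDerivAt_integral_of_dominated_loc_of_deriv_le (bound := fun _ => C)
    univ_mem (Eventually.of_forall fun x => (hF x).aestronglyMeasurable)
    ((hF x₀).intervalIntegrable _ _) hF'.aestronglyMeasurable
    (ae_of_all _ fun t _ x _ => hbound x t) intervalIntegrable_const
    (ae_of_all _ fun t _ x _ => hderiv x t)).2

def besselJDeriv (p : ℤ) (y : ℝ) : ℝ :=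
  (1 / π) * ∫ s in (0 : ℝ)..π, sin s * sin (p * s - y * sin s)

def besselJDeriv2 (p : ℤ) (y : ℝ) : ℝ :=
  (1 / π) * ∫ s in (0 : ℝ)..π, -(sin s ^ 2 * cos (p * s - y * sin s))

lemma hasDerivAt_besselJ (p : ℤ) (y : ℝ) : HasDerivAt (besselJ p) (besselJDeriv p y) y := by
  refine (hasDerivAt_intervalIntegral_of_abs_deriv_le (C := 1)
    (F := fun x s => cos (p * s - x * sin s)) (F' := fun x s => sin s * sin (p * s - x * sin s))
    (fun _ => by fun_prop) (by fun_prop) (fun x s => ?_) (fun x s => ?_)).const_mul (1 / π)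
  · simpa [mul_comm] using ((hasDerivAt_mul_const (sin s)).const_sub (p * s)).cos
  · rw [abs_mul]
    exact mul_le_one₀ (abs_sin_le_one s) (abs_nonneg _) (abs_sin_le_one _)

lemma hasDerivAt_besselJDeriv (p : ℤ) (y : ℝ) :
    HasDerivAt (besselJDeriv p) (besselJDeriv2 p y) y := by
  refine (hasDerivAt_intervalIntegral_of_abs_deriv_le (C := 1)
    (F := fun x s => sin s * sin (p * s - x * sin s))
    (F' := fun x s => -(sin s ^ 2 * cos (p * s - x * sin s))) (fun _ => by fun_prop)
    (by fun_prop) (fun x s => ?_) (fun x s => ?_)).const_mul (1 / π)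
  · exact ((((hasDerivAt_mul_const (sin s)).const_sub (p * s)).sin).const_mul (sin s)).congr_deriv
      (by ring)
  · rw [abs_neg, abs_mul, abs_pow]
    exact mul_le_one₀ (pow_le_one₀ (abs_nonneg _) (abs_sin_le_one s)) (abs_nonneg _)
      (abs_cos_le_one _)

lemma besselJ_ode (p : ℤ) (y : ℝ) :
    y ^ 2 * besselJDeriv2 p y + y * besselJDeriv p y + (y ^ 2 - p ^ 2) * besselJ p y = 0 := by
  have hprim : ∀ s, HasDerivAt (fun s => -((p + y * cos s) * sin (p * s - y * sin s)))
      (y ^ 2 * -(sin s ^ 2 * cos (p * s - y * sin s)) + y * (sin s * sin (p * s - y * sin s))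
        + (y ^ 2 - p ^ 2) * cos (p * s - y * sin s)) s := by
    intro s
    have hphase : HasDerivAt (fun s => p * s - y * sin s) (p - y * cos s) s := by
      simpa using ((hasDerivAt_id s).const_mul (p : ℝ)).fun_sub ((hasDerivAt_sin s).const_mul y)
    refine ((((hasDerivAt_cos s).const_mul y).const_add (p : ℝ)).fun_mul hphase.sin).fun_neg
      |>.congr_deriv ?_
    linear_combination (y ^ 2 * cos (p * s - y * sin s)) * sin_sq_add_cos_sq s
  have hint : ∀ f : ℝ → ℝ, Continuous f → IntervalIntegrable f volume 0 π :=
    fun f hf => hf.intervalIntegrable _ _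
  have hzero := intervalIntegral.integral_eq_sub_of_hasDerivAt (fun s _ => hprim s)
    (hint _ (by fun_prop))
  rw [intervalIntegral.integral_add (hint _ (by fun_prop)) (hint _ (by fun_prop)),
    intervalIntegral.integral_add (hint _ (by fun_prop)) (hint _ (by fun_prop)),
    intervalIntegral.integral_const_mul, intervalIntegral.integral_const_mul,
    intervalIntegral.integral_const_mul] at hzero
  simp only [sin_pi, sin_zero, mul_zero, sub_zero, sin_int_mul_pi, neg_zero] at hzero
  simp only [besselJ, besselJDeriv, besselJDeriv2]
  linear_combination (1 / π) * hzero

lemma exists_abs_le_of_perturbed_oscillator {u v : ℝ → ℝ} {c : ℝ}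
    (hu : ∀ t, 0 < t → HasDerivAt u (v t) t)
    (hv : ∀ t, 0 < t → HasDerivAt v ((c / t ^ 2 - 1) * u t) t) :
    ∃ M, ∀ t, 1 ≤ t → |u t| ≤ M := by
  -- the energy `u² + v²`, damped by `exp (|c| / t)`, is nonincreasing
  set W : ℝ → ℝ := fun t => (u t ^ 2 + v t ^ 2) * exp (|c| / t)
  have hW : ∀ t, 0 < t → HasDerivAt W
      (exp (|c| / t) * ((2 * c * u t * v t - |c| * (u t ^ 2 + v t ^ 2)) / t ^ 2)) t := by
    intro t ht
    refine ((((hu t ht).fun_pow 2).fun_add ((hv t ht).fun_pow 2)).fun_mul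
      ((hasDerivAt_inv ht.ne').const_mul |c|).exp).congr_deriv ?_
    field_simp
    ring
  have hanti : AntitoneOn W (Ici 1) := by
    refine antitoneOn_of_hasDerivWithinAt_nonpos (convex_Ici 1)
      (fun t ht => (hW t (by linarith [mem_Ici.1 ht])).continuousAt.continuousWithinAt)
      (fun t ht => (hW t ?_).hasDerivWithinAt) (fun t ht => ?_)
    · rw [interior_Ici] at ht; linarith [mem_Ioi.1 ht]
    · refine mul_nonpos_of_nonneg_of_nonpos (exp_pos _).le (div_nonpos_of_nonpos_of_nonneg ?_
        (sq_nonneg t))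
      nlinarith [abs_mul_abs_self c, abs_nonneg c, sq_nonneg (u t - v t), sq_nonneg (u t + v t),
        le_abs_self c, neg_abs_le c]
  refine ⟨√(W 1), fun t ht => ?_⟩
  rw [← sqrt_sq_eq_abs]
  refine sqrt_le_sqrt (le_trans ?_ (hanti self_mem_Ici ht ht))
  calc u t ^ 2 ≤ u t ^ 2 + v t ^ 2 := le_add_of_nonneg_right (sq_nonneg _)
    _ ≤ W t := le_mul_of_one_le_right (by positivity) (one_le_exp (by positivity))

lemma hasDerivAt_sqrt_mul_besselJ (p : ℤ) {t : ℝ} (ht : 0 < t) :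
    HasDerivAt (fun t => √t * besselJ p t)
      (besselJ p t / (2 * √t) + √t * besselJDeriv p t) t :=
  ((hasDerivAt_sqrt ht.ne').fun_mul (hasDerivAt_besselJ p t)).congr_deriv (by ring)

lemma hasDerivAt_besselJ_liouville (p : ℤ) {t : ℝ} (ht : 0 < t) :
    HasDerivAt (fun t => besselJ p t / (2 * √t) + √t * besselJDeriv p t)
      (((p ^ 2 - 1 / 4) / t ^ 2 - 1) * (√t * besselJ p t)) t := by
  refine (((hasDerivAt_besselJ p t).fun_div ((hasDerivAt_sqrt ht.ne').const_mul 2)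
    (by positivity)).fun_add ((hasDerivAt_sqrt ht.ne').fun_mul
    (hasDerivAt_besselJDeriv p t))).congr_deriv ?_
  have hode := besselJ_ode p t
  obtain ⟨s, hs, rfl⟩ : ∃ s, 0 < s ∧ t = s ^ 2 :=
    ⟨√t, sqrt_pos.2 ht, (sq_sqrt ht.le).symm⟩
  generalize besselJ p (s ^ 2) = a, besselJDeriv p (s ^ 2) = b,
    besselJDeriv2 p (s ^ 2) = c at hode ⊢
  rw [sqrt_sq hs.le]
  field_simp
  linear_combination 16 * hode

lemma besselJ_neg (p : ℤ) (y : ℝ) : besselJ p (-y) = (-1) ^ p * besselJ p y := by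
  have h : ∀ s, cos (p * s - -y * sin s) = (-1) ^ p * cos (p * (π - s) - y * sin (π - s)) := by
    intro s
    rw [sin_pi_sub, show p * (π - s) - y * sin s = p * π - (p * s + y * sin s) by ring,
      cos_int_mul_pi_sub, ← mul_assoc, ← mul_zpow, neg_one_mul, neg_neg, one_zpow, one_mul]
    ring_nf
  simp only [besselJ, h, intervalIntegral.integral_const_mul,
    intervalIntegral.integral_comp_sub_left (fun s => cos (p * s - y * sin s)), sub_self, sub_zero]
  ring

lemma exists_abs_besselJ_le (p : ℤ) :
    ∃ K, ∀ y, 1 ≤ |y| → |besselJ p y| ≤ K * |y| ^ (-(1 / 2 : ℝ)) := by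
  obtain ⟨M, hM⟩ := exists_abs_le_of_perturbed_oscillator
    (fun t ht => hasDerivAt_sqrt_mul_besselJ p ht) (fun t ht => hasDerivAt_besselJ_liouville p ht)
  have hdecay : ∀ t, 1 ≤ t → |besselJ p t| ≤ M * t ^ (-(1 / 2 : ℝ)) := by
    intro t ht
    have hs : 0 < √t := sqrt_pos.2 (by linarith)
    rw [rpow_neg (by linarith), ← sqrt_eq_rpow, ← div_eq_mul_inv, le_div_iff₀ hs]
    calc |besselJ p t| * √t = |√t * besselJ p t| := by
          rw [abs_mul, abs_of_pos hs, mul_comm]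
      _ ≤ M := hM t ht
  refine ⟨M, fun y hy => ?_⟩
  rcases le_or_gt 0 y with hy0 | hy0
  · rw [abs_of_nonneg hy0] at hy ⊢
    exact hdecay y hy
  · rw [abs_of_neg hy0] at hy ⊢
    simpa [besselJ_neg, abs_mul] using hdecay (-y) hy

@[fun_prop]
lemma continuous_besselJ (p : ℤ) : Continuous (besselJ p) :=
  Differentiable.continuous fun y => (hasDerivAt_besselJ p y).differentiableAt

lemma besselJ_add_sub_besselJ_sub (p : ℤ) (x t : ℝ) :
    besselJ p (x + t) - besselJ p (x - t) =
      (2 / π) * ∫ s in (0 : ℝ)..π, sin (p * s - x * sin s) * sin (t * sin s) := by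
  have h : ∀ s, cos (p * s - (x + t) * sin s) - cos (p * s - (x - t) * sin s) =
      2 * (sin (p * s - x * sin s) * sin (t * sin s)) := by
    intro s
    rw [cos_sub_cos, show (p * s - (x + t) * sin s - (p * s - (x - t) * sin s)) / 2 =
      -(t * sin s) by ring, show (p * s - (x + t) * sin s + (p * s - (x - t) * sin s)) / 2 =
      p * s - x * sin s by ring, sin_neg]
    ring
  rw [besselJ, besselJ, ← mul_sub, ← intervalIntegral.integral_sub
    ((by fun_prop : Continuous _).intervalIntegrable _ _)
    ((by fun_prop : Continuous _).intervalIntegrable _ _)]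
  simp only [h, intervalIntegral.integral_const_mul]
  ring

lemma isBigO_besselJ_sub_div (p : ℤ) (x : ℝ) :
    (fun t => (besselJ p (x + t) - besselJ p (x - t)) / t) =O[atTop]
      fun t => t ^ (-(3 / 2 : ℝ)) := by
  obtain ⟨K, hK⟩ := exists_abs_besselJ_le p
  have hK0 : 0 ≤ K := by simpa using (abs_nonneg _).trans (hK 1 (by simp))
  -- for large `t`, both `x + t` and `x - t` have absolute value at least `t / 2 ≥ 1`
  have hJ : ∀ y t, 2 ≤ t → t / 2 ≤ |y| →
      |besselJ p y| ≤ K * (t / 2) ^ (-(1 / 2 : ℝ)) :=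
    fun y t ht hy => (hK y (by linarith)).trans (mul_le_mul_of_nonneg_left
      (rpow_le_rpow_of_nonpos (by linarith) hy (by norm_num)) hK0)
  refine Asymptotics.IsBigO.of_bound (2 * K * 2 ^ (1 / 2 : ℝ)) ?_
  filter_upwards [eventually_ge_atTop (2 * (|x| + 1))] with t ht
  have ht0 : 0 < t := by linarith [abs_nonneg x]
  have hrpow : (t / 2) ^ (-(1 / 2 : ℝ)) / t = 2 ^ (1 / 2 : ℝ) * t ^ (-(3 / 2 : ℝ)) := by
    rw [div_rpow ht0.le zero_le_two, rpow_neg zero_le_two, div_inv_eq_mul,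
      show -(3 / 2 : ℝ) = -(1 / 2) - 1 by norm_num, rpow_sub_one ht0.ne']
    ring
  rw [norm_div, norm_of_nonneg (rpow_nonneg ht0.le _), norm_of_nonneg ht0.le, div_le_iff₀ ht0]
  calc ‖besselJ p (x + t) - besselJ p (x - t)‖
      ≤ |besselJ p (x + t)| + |besselJ p (x - t)| := norm_sub_le _ _
    _ ≤ K * (t / 2) ^ (-(1 / 2 : ℝ)) + K * (t / 2) ^ (-(1 / 2 : ℝ)) := by
        gcongr <;> refine hJ _ t (by linarith [abs_nonneg x]) ?_ <;>
          cases abs_cases x <;> cases abs_cases (x + t) <;> cases abs_cases (x - t) <;> linarith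
    _ = 2 * K * ((t / 2) ^ (-(1 / 2 : ℝ)) / t) * t := by field_simp; ring
    _ = 2 * K * 2 ^ (1 / 2 : ℝ) * t ^ (-(3 / 2 : ℝ)) * t := by rw [hrpow]; ring

lemma integrableOn_besselJ_sub_div (p : ℤ) (x : ℝ) {ε : ℝ} (hε : 0 < ε) :
    IntegrableOn (fun t => (besselJ p (x + t) - besselJ p (x - t)) / t) (Ioi ε) := by
  have hcont : ContinuousOn (fun t => (besselJ p (x + t) - besselJ p (x - t)) / t) (Ici ε) :=
    ((by fun_prop : Continuous fun t => besselJ p (x + t) - besselJ p (x - t)).continuousOn.div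
      continuousOn_id fun t ht => (hε.trans_le ht).ne')
  exact ((hcont.locallyIntegrableOn measurableSet_Ici).integrableOn_of_isBigO_atTop
    (isBigO_besselJ_sub_div p x) (integrableAtFilter_rpow_atTop_iff.2 (by norm_num))).mono_set
    Ioi_subset_Ici_self

lemma sin_mul_div_eq_mul_sinc {t : ℝ} (ht : t ≠ 0) (c : ℝ) :
    sin (t * c) / t = c * sinc (t * c) := by
  rcases eq_or_ne c 0 with rfl | hc
  · simp
  · rw [sinc_of_ne_zero (mul_ne_zero ht hc)]
    field_simp

lemma intervalIntegral_besselJ_sub_div (p : ℤ) (x : ℝ) {ε R : ℝ} (hε : 0 < ε)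
    (hR : 0 < R) :
    ∫ t in ε..R, (besselJ p (x + t) - besselJ p (x - t)) / t =
      (2 / π) * ((∫ s in (0 : ℝ)..π, sin (p * s - x * sin s) * sinIntegral (R * sin s)) -
        ∫ s in (0 : ℝ)..π, sin (p * s - x * sin s) * sinIntegral (ε * sin s)) := by
  have hdiv : ∀ t ∈ uIcc ε R, (besselJ p (x + t) - besselJ p (x - t)) / t =
      (2 / π) * ∫ s in (0 : ℝ)..π, sin (p * s - x * sin s) * (sin s * sinc (t * sin s)) := by
    intro t ht
    have ht0 : t ≠ 0 := (lt_of_lt_of_le (lt_min hε hR) ht.1).ne'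
    rw [besselJ_add_sub_besselJ_sub, mul_div_assoc, ← intervalIntegral.integral_div]
    simp_rw [mul_div_assoc, sin_mul_div_eq_mul_sinc ht0]
  have hcont : Continuous (Function.uncurry fun t s : ℝ =>
      sin (p * s - x * sin s) * (sin s * sinc (t * sin s))) := by
    unfold Function.uncurry; fun_prop
  rw [intervalIntegral.integral_congr hdiv, intervalIntegral.integral_const_mul,
    intervalIntegral_intervalIntegral_swap ((hcont.continuousOn.integrableOn_compact
      (isCompact_uIcc.prod isCompact_uIcc)).mono_set (prod_mono uIoc_subset_uIcc uIoc_subset_uIcc))]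
  simp_rw [intervalIntegral.integral_const_mul, intervalIntegral.mul_integral_comp_mul_right,
    ← sinIntegral_sub_sinIntegral, mul_sub]
  rw [intervalIntegral.integral_sub ((by fun_prop : Continuous _).intervalIntegrable _ _)
    ((by fun_prop : Continuous _).intervalIntegrable _ _), mul_sub]

lemma tendsto_integral_mul_sinIntegral_mul_sin {l : Filter ℝ} [l.IsCountablyGenerated]
    {g : ℝ → ℝ} (hg : Continuous g) {L : ℝ} (hl : ∀ᶠ r in l, 0 ≤ r)
    (hlim : ∀ s ∈ Ioo 0 π, Tendsto (fun r => sinIntegral (r * sin s)) l (𝓝 L)) :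
    Tendsto (fun r => ∫ s in (0 : ℝ)..π, g s * sinIntegral (r * sin s)) l
      (𝓝 (∫ s in (0 : ℝ)..π, g s * L)) := by
  refine intervalIntegral.tendsto_integral_filter_of_dominated_convergence (fun s => |g s| * 4)
    (Eventually.of_forall fun r => (by fun_prop : Continuous _).aestronglyMeasurable) ?_
    ((by fun_prop : Continuous _).intervalIntegrable _ _) ?_
  · filter_upwards [hl] with r hr
    refine ae_of_all _ fun s hs => ?_
    rw [uIoc_of_le pi_pos.le] at hs
    rw [norm_mul, norm_eq_abs, norm_eq_abs]
    gcongr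
    exact abs_sinIntegral_le_four (mul_nonneg hr (sin_nonneg_of_nonneg_of_le_pi hs.1.le hs.2))
  · filter_upwards [volume.ae_ne π] with s hsπ hs
    rw [uIoc_of_le pi_pos.le] at hs
    exact (hlim s ⟨hs.1, lt_of_le_of_ne hs.2 hsπ⟩).const_mul (g s)

lemma integral_Ioi_besselJ_sub_div (p : ℤ) (x : ℝ) {ε : ℝ} (hε : 0 < ε) :
    ∫ t in Ioi ε, (besselJ p (x + t) - besselJ p (x - t)) / t =
      (2 / π) * ((∫ s in (0 : ℝ)..π, sin (p * s - x * sin s) * (π / 2)) -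
        ∫ s in (0 : ℝ)..π, sin (p * s - x * sin s) * sinIntegral (ε * sin s)) := by
  have hlim := tendsto_integral_mul_sinIntegral_mul_sin (g := fun s => sin (p * s - x * sin s))
    (by fun_prop) (eventually_ge_atTop 0) fun s hs =>
      tendsto_sinIntegral_atTop.comp
        (tendsto_id.atTop_mul_const (sin_pos_of_pos_of_lt_pi hs.1 hs.2))
  refine tendsto_nhds_unique (intervalIntegral_tendsto_integral_Ioi ε
    (integrableOn_besselJ_sub_div p x hε) tendsto_id)
    (((hlim.sub_const _).const_mul (2 / π)).congr' ?_)
  filter_upwards [eventually_gt_atTop 0] with R hR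
  exact (intervalIntegral_besselJ_sub_div p x hε hR).symm

lemma tendsto_integral_Ioi_besselJ_sub_div (p : ℤ) (x : ℝ) :
    Tendsto (fun ε => ∫ t in Ioi ε, (besselJ p (x + t) - besselJ p (x - t)) / t)
      (nhdsWithin 0 (Ioi 0)) (𝓝 (∫ s in (0 : ℝ)..π, sin (p * s - x * sin s))) := by
  have hlim := tendsto_integral_mul_sinIntegral_mul_sin (l := nhdsWithin 0 (Ioi 0))
    (g := fun s => sin (p * s - x * sin s)) (by fun_prop)
    (eventually_mem_nhdsWithin.mono fun _ h => le_of_lt h) fun s _ =>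
      ((continuous_sinIntegral.comp (continuous_id.mul continuous_const)).tendsto' 0 0
        (by simp)).mono_left nhdsWithin_le_nhds
  simp only [mul_zero, intervalIntegral.integral_zero] at hlim
  have hval : (2 / π) * ((∫ s in (0 : ℝ)..π, sin (p * s - x * sin s) * (π / 2)) - 0) =
      ∫ s in (0 : ℝ)..π, sin (p * s - x * sin s) := by
    rw [sub_zero, intervalIntegral.integral_mul_const]
    field_simp
  rw [← hval]
  refine ((tendsto_const_nhds.sub hlim).const_mul (2 / π)).congr' ?_
  filter_upwards [self_mem_nhdsWithin] with ε hε
  exact (integral_Ioi_besselJ_sub_div p x hε).symm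

lemma integral_sin_neg_mul {c : ℝ} (hc : c ≠ 0) :
    (1 / π) * (∫ t in (0 : ℝ)..π, sin (-(c * t))) = -((1 - cos (π * c)) / (π * c)) := by
  simp only [sin_neg, intervalIntegral.integral_neg, intervalIntegral.integral_comp_mul_left sin hc,
    integral_sin, mul_zero, cos_zero, smul_eq_mul, mul_comm c π]
  field_simp

/-- The Hilbert transform of the Bessel function `J_p`, defined as the principal value
`H(J_p)(x) = -(1/π) lim_{ε→0⁺} ∫_ε^∞ (J_p(x+t) - J_p(x-t))/t dt`, admits the
representation `(1/π) ∫₀^π sin(x sin t - pt) dt`; in particular at `x = 0` it equals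
`(1/π)∫₀^π sin(-pt) dt = -(1-cos(πp))/(πp)` for `p ≠ 0`, which vanishes for even `p`. -/
theorem hilbert_transform_besselJ (p : ℤ) (x : ℝ) :
    Tendsto
        (fun ε : ℝ =>
          -(1 / π) * ∫ t in Set.Ioi ε, (besselJ p (x + t) - besselJ p (x - t)) / t)
        (nhdsWithin 0 (Set.Ioi 0))
        (nhds ((1 / π) * ∫ t in (0 : ℝ)..π, Real.sin (x * Real.sin t - p * t))) ∧
      (p ≠ 0 →
        (1 / π) * (∫ t in (0 : ℝ)..π, Real.sin (-(p * t))) =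
          -((1 - Real.cos (π * p)) / (π * p))) ∧
      (p ≠ 0 → Even p →
        (1 / π) * (∫ t in (0 : ℝ)..π, Real.sin (-(p * t))) = 0) := by
  have hodd : ∫ t in (0 : ℝ)..π, sin (x * sin t - p * t) =
      -∫ s in (0 : ℝ)..π, sin (p * s - x * sin s) := by
    rw [← intervalIntegral.integral_neg]
    simp only [← sin_neg, neg_sub]
  refine ⟨?_, fun hp => integral_sin_neg_mul (Int.cast_ne_zero.2 hp), fun hp hev => ?_⟩
  · simpa [hodd] using (tendsto_integral_Ioi_besselJ_sub_div p x).const_mul (-(1 / π))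
  · obtain ⟨k, rfl⟩ := hev
    rw [integral_sin_neg_mul (Int.cast_ne_zero.2 hp), Int.cast_add,
      show π * (k + k) = k * (2 * π) by ring, cos_int_mul_two_pi]
    simp
end
end
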